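/- arXiv:2207.01789 — 9 statements merged into one kernel-verified Lean document; each statement's English description precedes it below -/
import Mathlib

section
/- Let x ∈ ℝⁿ with nonnegative entries satisfy 1ᵀx ≤ ‖x‖². Then 1ᵀ(I − xxᵀ/‖x‖²)1 ≥ ‖(1 − x)₊‖², i.e., n − (1ᵀx)²/‖x‖² ≥ Σᵢ (max(1 − xᵢ, 0))². -/
/-!
With `t = 1ᵀx / ‖x‖²`, the vector `1 - t x` is the projection of `1` onto `x^⊥`, so
`n - (1ᵀx)² / ‖x‖² = ‖1 - t x‖²`. The hypothesis `1ᵀx ≤ ‖x‖²` says `t ≤ 1`, so `t xᵢ ≤ xᵢ` as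
`xᵢ ≥ 0`, and hence `(1 - xᵢ)₊ ≤ |1 - t xᵢ|` entrywise.
-/

open Finset

lemma sq_max_one_sub_le_sq_one_sub_mul {a t : ℝ} (ha : 0 ≤ a) (ht : t ≤ 1) :
    max (1 - a) 0 ^ 2 ≤ (1 - t * a) ^ 2 := by
  rcases le_or_gt a 1 with hle | hgt
  · have hta : t * a ≤ a := mul_le_of_le_one_left ha ht
    rw [max_eq_left (by linarith)]
    exact pow_le_pow_left₀ (by linarith) (by linarith) 2
  · rw [max_eq_right (by linarith)]
    simpa using sq_nonneg (1 - t * a)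

lemma sum_sq_one_sub_div_mul {ι : Type*} [Fintype ι] (x : ι → ℝ) :
    ∑ i, (1 - (∑ j, x j) / (∑ j, x j ^ 2) * x i) ^ 2
      = Fintype.card ι - (∑ i, x i) ^ 2 / ∑ i, x i ^ 2 := by
  set s := ∑ i, x i
  set q := ∑ i, x i ^ 2
  have expand : ∀ i, (1 - s / q * x i) ^ 2 = 1 - 2 * (s / q) * x i + (s / q) ^ 2 * x i ^ 2 :=
    fun i => by ring
  simp only [expand, sum_add_distrib, sum_sub_distrib, ← mul_sum, sum_const, card_univ,
    nsmul_eq_mul, mul_one]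
  rcases eq_or_ne q 0 with hq | hq
  · simp [hq] -- both `s / q` and `s ^ 2 / q` are the junk value `0`
  · field_simp
    ring

theorem ones_quadratic_ge_pos_part_general (n : ℕ) (x : Fin n → ℝ)
    (hx : ∀ i, 0 ≤ x i)
    (h : ∑ i, x i ≤ ∑ i, (x i) ^ 2) :
    ∑ i, (max (1 - x i) 0) ^ 2 ≤ (n : ℝ) - (∑ i, x i) ^ 2 / (∑ i, (x i) ^ 2) := by
  have hq : 0 ≤ ∑ i, x i ^ 2 := sum_nonneg fun i _ => sq_nonneg (x i)
  have ht : (∑ i, x i) / ∑ i, x i ^ 2 ≤ 1 := div_le_one_of_le₀ h hq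
  calc ∑ i, max (1 - x i) 0 ^ 2
      ≤ ∑ i, (1 - (∑ j, x j) / (∑ j, x j ^ 2) * x i) ^ 2 :=
        sum_le_sum fun i _ => sq_max_one_sub_le_sq_one_sub_mul (hx i) ht
    _ = n - (∑ i, x i) ^ 2 / ∑ i, x i ^ 2 := by
        rw [sum_sq_one_sub_div_mul, Fintype.card_fin]

/-- For `x ∈ ℝⁿ` with nonnegative entries, `x ≠ 0`, satisfying
`1ᵀx ≤ ‖x‖²`, we have `1ᵀ(I − xxᵀ/‖x‖²)1 = n − (1ᵀx)²/‖x‖² ≥ ‖(1 − x)₊‖²`. -/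
theorem ones_quadratic_ge_pos_part (n : ℕ) (x : Fin n → ℝ)
    (hx : ∀ i, 0 ≤ x i) (hx0 : x ≠ 0)
    (h : ∑ i, x i ≤ ∑ i, (x i) ^ 2) :
    ∑ i, (max (1 - x i) 0) ^ 2 ≤ (n : ℝ) - (∑ i, x i) ^ 2 / (∑ i, (x i) ^ 2) :=
  ones_quadratic_ge_pos_part_general n x hx h
end

section
/- Let s, d ∈ ℝ₊ⁿ (entrywise nonnegative vectors) and let s_lb ≥ 0 satisfy sᵢ ≥ s_lb for all i. If s_lb·(1ᵀd) ≤ ‖d‖², then ‖s‖² − ‖(s − d)₊‖² ≥ s_lb²·(1ᵀd)²/‖d‖². If instead s_lb·(1ᵀd) ≥ ‖d‖², then ‖s‖² − ‖(s − d)₊‖² ≥ ‖d‖². -/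
/-! Coordinatewise, `sᵢ² − ((sᵢ − dᵢ)₊)² ≥ 2 t s_lb dᵢ − t² dᵢ²` for every `t ∈ [0, 1]`. Summing gives
`‖s‖² − ‖(s − d)₊‖² ≥ 2 t s_lb (1ᵀd) − t² ‖d‖²`, and the two cases of the theorem are the choices
`t = s_lb (1ᵀd) / ‖d‖²` (the maximiser of the right-hand side, admissible when it is `≤ 1`) and `t = 1`. -/

open Finset

lemma two_mul_sub_sq_le_sq_sub_sq_max_sub {s d slb t : ℝ} (hslb : 0 ≤ slb) (hle : slb ≤ s)
    (hd : 0 ≤ d) (ht : 0 ≤ t) (ht1 : t ≤ 1) :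
    2 * t * slb * d - t ^ 2 * d ^ 2 ≤ s ^ 2 - max (s - d) 0 ^ 2 := by
  rcases le_or_gt d s with hds | hsd
  · rw [max_eq_left (by linarith)]
    have h₁ : 0 ≤ (1 - t) * d * (2 * s - (1 + t) * d) :=
      mul_nonneg (mul_nonneg (by linarith) hd) (by nlinarith)
    have h₂ : 0 ≤ t * d * (s - slb) := mul_nonneg (mul_nonneg ht hd) (by linarith)
    nlinarith
  · -- `2 t s_lb d − t² d² = s_lb² − (s_lb − t d)² ≤ s_lb² ≤ s²`
    rw [max_eq_right (by linarith)]
    nlinarith [sq_nonneg (slb - t * d)]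

lemma two_mul_sum_sub_sq_le_sum_sq_sub_sum_sq_max_sub {ι : Type*} [Fintype ι] {s d : ι → ℝ}
    {slb t : ℝ} (hslb : 0 ≤ slb) (hle : ∀ i, slb ≤ s i) (hd : ∀ i, 0 ≤ d i) (ht : 0 ≤ t)
    (ht1 : t ≤ 1) :
    2 * t * slb * ∑ i, d i - t ^ 2 * ∑ i, d i ^ 2 ≤ ∑ i, s i ^ 2 - ∑ i, max (s i - d i) 0 ^ 2 := by
  rw [mul_sum, mul_sum, ← sum_sub_distrib, ← sum_sub_distrib]
  exact sum_le_sum fun i _ => two_mul_sub_sq_le_sq_sub_sq_max_sub hslb (hle i) (hd i) ht ht1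

theorem keyclaim_general (n : ℕ) (s d : Fin n → ℝ) (slb : ℝ)
    (hd : ∀ i, 0 ≤ d i)
    (hslb : 0 ≤ slb) (hle : ∀ i, slb ≤ s i) :
    (d ≠ 0 → slb * (∑ i, d i) ≤ ∑ i, (d i) ^ 2 →
      slb ^ 2 * (∑ i, d i) ^ 2 / (∑ i, (d i) ^ 2) ≤
        ∑ i, (s i) ^ 2 - ∑ i, (max (s i - d i) 0) ^ 2) ∧
    ((∑ i, (d i) ^ 2) ≤ slb * (∑ i, d i) →
      ∑ i, (d i) ^ 2 ≤ ∑ i, (s i) ^ 2 - ∑ i, (max (s i - d i) 0) ^ 2) := by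
  refine ⟨fun hne hsmall => ?_, fun hlarge => ?_⟩
  · have hD : 0 < ∑ i, d i ^ 2 := by
      obtain ⟨i, hi⟩ := Function.ne_iff.mp hne
      exact sum_pos' (fun j _ => sq_nonneg _) ⟨i, mem_univ i, pow_pos ((hd i).lt_of_ne' hi) 2⟩
    set t := slb * (∑ i, d i) / ∑ i, d i ^ 2 with ht_def
    have ht : 0 ≤ t := div_nonneg (mul_nonneg hslb (sum_nonneg fun i _ => hd i)) hD.le
    have ht1 : t ≤ 1 := (div_le_one hD).mpr hsmall
    have hopt : 2 * t * slb * ∑ i, d i - t ^ 2 * ∑ i, d i ^ 2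
        = slb ^ 2 * (∑ i, d i) ^ 2 / ∑ i, d i ^ 2 := by
      rw [ht_def]
      field_simp
      ring
    exact hopt ▸ two_mul_sum_sub_sq_le_sum_sq_sub_sum_sq_max_sub hslb hle hd ht ht1
  · have := two_mul_sum_sub_sq_le_sum_sq_sub_sum_sq_max_sub hslb hle hd zero_le_one le_rfl
    linarith

/-- Lemma `keyclaim`: for entrywise nonnegative vectors `s, d` with
`sᵢ ≥ s_lb ≥ 0`, a two-case lower bound on `‖s‖² − ‖(s − d)₊‖²`. -/
theorem keyclaim (n : ℕ) (s d : Fin n → ℝ) (slb : ℝ)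
    (hs : ∀ i, 0 ≤ s i) (hd : ∀ i, 0 ≤ d i)
    (hslb : 0 ≤ slb) (hle : ∀ i, slb ≤ s i) :
    (d ≠ 0 → slb * (∑ i, d i) ≤ ∑ i, (d i) ^ 2 →
      slb ^ 2 * (∑ i, d i) ^ 2 / (∑ i, (d i) ^ 2) ≤
        ∑ i, (s i) ^ 2 - ∑ i, (max (s i - d i) 0) ^ 2) ∧
    ((∑ i, (d i) ^ 2) ≤ slb * (∑ i, d i) →
      ∑ i, (d i) ^ 2 ≤ ∑ i, (s i) ^ 2 - ∑ i, (max (s i - d i) 0) ^ 2) :=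
  keyclaim_general n s d slb hd hslb hle
end

section
/- (Regularized Eckart–Young) Let A be an n×n positive semidefinite symmetric matrix with eigenvalues s₁ ≥ ⋯ ≥ sₙ ≥ 0 and orthonormal eigenvectors u₁,…,uₙ, and let B be an r×r positive semidefinite symmetric matrix (r ≤ n) with eigenvalues 0 ≤ d₁ ≤ ⋯ ≤ d_r and orthonormal eigenvectors v₁,…,v_r. Then the minimum over Y ∈ ℝ^{n×r} of ‖A − YYᵀ‖_F² + 2⟨B, YᵀY⟩ equals Σᵢ₌₁ⁿ sᵢ² − Σᵢ₌₁ʳ (max(sᵢ − dᵢ, 0))², and is attained by Y* = Σᵢ₌₁ʳ uᵢvᵢᵀ·√(max(sᵢ − dᵢ, 0)). -/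
/-!
Conjugating by the orthogonal matrices with rows `uᵢ` and `vⱼ` turns `A` into `diag s`, `B` into
`diag d` and `Y` into some `X`. Diagonalize `XᵀX = W diag(ν) Wᵀ` with `ν` descending; the loss
becomes `Σ sᵢ² − 2 Σ sᵢ (XXᵀ)ᵢᵢ + Σ νₗ² + 2 Σ dⱼ (XᵀX)ⱼⱼ`.

Both diagonals have the form `(ZZᵀ)ᵢᵢ = Σₗ Pᵢₗ νₗ` with `ZᵀZ = diag ν` (take `Z = XW`, resp.
`Z = W diag(√ν)`), where `Pᵢₗ = Zᵢₗ² / νₗ` is doubly substochastic: its column sums are at most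
`1` trivially, its row sums are the diagonal of the orthogonal projection `Z diag(ν)⁻¹ Zᵀ`.
Against descending weights such a mixture is at most the sorted pairing (Abel summation, twice),
so `Σ sᵢ (XXᵀ)ᵢᵢ ≤ Σ sₗ νₗ` and `Σ dⱼ (XᵀX)ⱼⱼ ≥ Σ dₗ νₗ`. Hence the loss is at least
`Σ sᵢ² + Σₗ (νₗ² − 2 (sₗ − dₗ) νₗ) ≥ Σ sᵢ² − Σₗ max(sₗ − dₗ, 0)²`, with equality when
`XᵀX = diag(max(s − d, 0))`, which is what `Y*` realises.
-/

open Matrix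

/-- Squared Frobenius norm. -/
noncomputable def frob2 {m k : ℕ} (M : Matrix (Fin m) (Fin k) ℝ) : ℝ :=
  ∑ i, ∑ j, (M i j) ^ 2

/-- Frobenius inner product `⟨A, B⟩ = tr(AᵀB)`. -/
noncomputable def fip {m k : ℕ} (A B : Matrix (Fin m) (Fin k) ℝ) : ℝ :=
  ∑ i, ∑ j, A i j * B i j

open Finset

theorem sum_mul_le_sum_mul_of_sum_Iic_le {m : ℕ} {a f g : Fin m → ℝ} (ha : Antitone a)
    (ha0 : ∀ i, 0 ≤ a i) (hfg : ∀ k, ∑ i ∈ Iic k, f i ≤ ∑ i ∈ Iic k, g i) :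
    ∑ i, a i * f i ≤ ∑ i, a i * g i := by
  induction m with
  | zero => simp
  | succ m ih =>
    have split (h : Fin (m + 1) → ℝ) : ∑ i, a i * h i =
        ∑ i : Fin m, (a i.castSucc - a (Fin.last m)) * h i.castSucc +
          a (Fin.last m) * ∑ i, h i := by
      simp only [Fin.sum_univ_castSucc, mul_add, mul_sum, sub_mul, sum_sub_distrib]
      ring
    rw [split f, split g]
    gcongr ?_ + ?_
    · refine ih (fun i j hij => by simpa using ha (Fin.castSucc_le_castSucc_iff.2 hij))
        (fun i => sub_nonneg.2 (ha (Fin.le_last _))) fun k => ?_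
      simpa [← Fin.map_castSuccEmb_Iic] using hfg k.castSucc
    · exact mul_le_mul_of_nonneg_left
        (by simpa [← Fin.top_eq_last, Iic_top] using hfg (Fin.last m)) (ha0 _)

theorem sum_mul_le_sum_Iic {m : ℕ} {a π : Fin m → ℝ} (ha : Antitone a) (ha0 : ∀ i, 0 ≤ a i)
    (hπ0 : ∀ i, 0 ≤ π i) (hπ1 : ∀ i, π i ≤ 1) {K : Fin m} (hπ : ∑ i, π i ≤ K + 1) :
    ∑ i, a i * π i ≤ ∑ i ∈ Iic K, a i := by
  have hK : ∑ i ∈ Iic K, a i = ∑ i, a i * if i ≤ K then 1 else 0 := by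
    simp [mul_ite, ← sum_filter, filter_ge_eq_Iic]
  rw [hK]
  refine sum_mul_le_sum_mul_of_sum_Iic_le ha ha0 fun k => ?_
  rcases le_total k K with hk | hk
  · calc ∑ i ∈ Iic k, π i ≤ ∑ i ∈ Iic k, 1 := sum_le_sum fun i _ => hπ1 i
      _ = _ := sum_congr rfl fun i hi => (if_pos ((mem_Iic.1 hi).trans hk)).symm
  · calc ∑ i ∈ Iic k, π i ≤ ∑ i, π i :=
          sum_le_sum_of_subset_of_nonneg (subset_univ _) fun i _ _ => hπ0 i
      _ ≤ K + 1 := hπ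
      _ = _ := by
        rw [sum_boole, show ({i ∈ Iic k | i ≤ K} : Finset _) = Iic K by ext; simp; omega]
        simp

theorem sum_sum_mul_mul_le_of_substochastic {n r : ℕ} (hr : r ≤ n) {a : Fin n → ℝ}
    {b : Fin r → ℝ} (ha : Antitone a) (ha0 : ∀ i, 0 ≤ a i) (hb : Antitone b)
    (hb0 : ∀ l, 0 ≤ b l) {P : Matrix (Fin n) (Fin r) ℝ} (hP0 : ∀ i l, 0 ≤ P i l)
    (hrow : ∀ i, ∑ l, P i l ≤ 1) (hcol : ∀ l, ∑ i, P i l ≤ 1) :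
    ∑ i, ∑ l, a i * b l * P i l ≤ ∑ l, a (Fin.castLE hr l) * b l := by
  have hswap : ∑ i, ∑ l, a i * b l * P i l = ∑ l, b l * ∑ i, a i * P i l := by
    rw [sum_comm]
    exact sum_congr rfl fun l _ => by rw [mul_sum]; exact sum_congr rfl fun i _ => by ring
  rw [hswap, sum_congr rfl fun l _ => mul_comm (a _) (b l)]
  refine sum_mul_le_sum_mul_of_sum_Iic_le hb hb0 fun q => ?_
  calc ∑ l ∈ Iic q, ∑ i, a i * P i l = ∑ i, a i * ∑ l ∈ Iic q, P i l := by
        rw [sum_comm]; simp only [mul_sum]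
    _ ≤ ∑ i ∈ Iic (Fin.castLE hr q), a i := by
        refine sum_mul_le_sum_Iic ha ha0 (fun i => sum_nonneg fun l _ => hP0 i l)
          (fun i => (sum_le_sum_of_subset_of_nonneg (subset_univ _)
            fun l _ _ => hP0 i l).trans (hrow i)) ?_
        calc ∑ i, ∑ l ∈ Iic q, P i l = ∑ l ∈ Iic q, ∑ i, P i l := sum_comm
          _ ≤ ∑ l ∈ Iic q, 1 := sum_le_sum fun l _ => hcol l
          _ = _ := by simp
    _ = ∑ l ∈ Iic q, a (Fin.castLE hr l) := by
        rw [← Fin.map_castLEEmb_Iic q hr, sum_map]; rfl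

theorem diag_le_one_of_isSymm_of_isIdempotentElem {ι : Type*} [Fintype ι]
    {Q : Matrix ι ι ℝ} (hQ : Q.IsSymm) (hQQ : IsIdempotentElem Q) (i : ι) : Q i i ≤ 1 := by
  have hsq : Q i i = ∑ k, Q i k ^ 2 := by
    conv_lhs => rw [← hQQ.eq]
    simp [mul_apply, sq, hQ.apply]
  have : Q i i ^ 2 ≤ Q i i := hsq ▸ single_le_sum (fun k _ => sq_nonneg (Q i k)) (mem_univ i)
  nlinarith

theorem sum_sq_eq_of_transpose_mul_self_eq_diagonal {m k : Type*} [Fintype m] [DecidableEq k]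
    {Z : Matrix m k ℝ} {ν : k → ℝ} (hZ : Zᵀ * Z = diagonal ν) (l : k) :
    ∑ i, Z i l ^ 2 = ν l := by
  simpa [mul_apply, sq] using congr_fun (congr_fun hZ l) l

theorem sum_mul_diag_mul_transpose_le {n r : ℕ} (hr : r ≤ n) {Z : Matrix (Fin n) (Fin r) ℝ}
    {ν : Fin r → ℝ} (hZ : Zᵀ * Z = diagonal ν) (hν : Antitone ν) {a : Fin n → ℝ}
    (ha : Antitone a) (ha0 : ∀ i, 0 ≤ a i) :
    ∑ i, a i * (Z * Zᵀ) i i ≤ ∑ l, a (Fin.castLE hr l) * ν l := by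
  have hcol := sum_sq_eq_of_transpose_mul_self_eq_diagonal hZ
  have hν0 (l) : 0 ≤ ν l := hcol l ▸ sum_nonneg fun i _ => sq_nonneg _
  set P : Matrix (Fin n) (Fin r) ℝ := of fun i l => Z i l ^ 2 / ν l
  -- where `ν l = 0` the column `l` of `Z` vanishes, so the junk value `0 / 0 = 0` is harmless
  have hZP (i l) : Z i l ^ 2 = ν l * P i l := by
    rcases eq_or_ne (ν l) 0 with h | h
    · simp only [h, zero_mul]
      exact (sum_eq_zero_iff_of_nonneg fun i _ => sq_nonneg (Z i l)).1 ((hcol l).trans h) i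
        (mem_univ i)
    · simp [P, mul_div_cancel₀ _ h]
  have hrow (i) : ∑ l, P i l ≤ 1 := by
    set Q := Z * diagonal ν⁻¹ * Zᵀ
    have hQ : Q.IsSymm := by simp [Q, IsSymm, transpose_mul, Matrix.mul_assoc]
    have hQQ : IsIdempotentElem Q := by
      have hD : diagonal ν⁻¹ * diagonal ν * diagonal ν⁻¹ = diagonal ν⁻¹ := by
        simp only [diagonal_mul_diagonal]
        congr 1; ext l; simpa using mul_inv_mul_cancel (ν l)⁻¹
      calc Q * Q = Z * (diagonal ν⁻¹ * (Zᵀ * Z) * diagonal ν⁻¹) * Zᵀ := by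
            simp only [Q, Matrix.mul_assoc]
        _ = Q := by rw [hZ, hD]
    calc ∑ l, P i l = Q i i := by
          simp only [Q, P, mul_apply, diagonal_apply, mul_ite, mul_zero, sum_ite_eq', mem_univ,
            if_true, of_apply, transpose_apply]
          exact sum_congr rfl fun l _ => by rw [Pi.inv_apply]; ring
      _ ≤ 1 := diag_le_one_of_isSymm_of_isIdempotentElem hQ hQQ i
  calc ∑ i, a i * (Z * Zᵀ) i i = ∑ i, ∑ l, a i * ν l * P i l := by
        refine sum_congr rfl fun i _ => ?_
        simp only [mul_apply, transpose_apply, mul_sum, ← sq, hZP, mul_assoc]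
    _ ≤ _ := sum_sum_mul_mul_le_of_substochastic hr ha ha0 hν hν0
        (fun i l => div_nonneg (sq_nonneg _) (hν0 l)) hrow fun l => by
          simp only [P, of_apply, ← sum_div, hcol]
          exact div_self_le_one _

theorem sum_mul_le_sum_mul_diag_conj_diagonal {r : ℕ} {W : Matrix (Fin r) (Fin r) ℝ}
    (hW : W * Wᵀ = 1) {ν : Fin r → ℝ} (hν : Antitone ν) (hν0 : ∀ l, 0 ≤ ν l) {d : Fin r → ℝ}
    (hd : Monotone d) : ∑ l, d l * ν l ≤ ∑ j, d j * (W * diagonal ν * Wᵀ) j j := by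
  set Z := W * diagonal fun l => √(ν l)
  have hsqrt : ((diagonal fun l => √(ν l)) * diagonal fun l => √(ν l)) = diagonal ν := by
    rw [diagonal_mul_diagonal]
    exact congrArg diagonal (funext fun l => Real.mul_self_sqrt (hν0 l))
  have hZ : Zᵀ * Z = diagonal ν := by
    simp only [Z, transpose_mul, diagonal_transpose, Matrix.mul_assoc]
    rw [← Matrix.mul_assoc Wᵀ, mul_eq_one_comm.mp hW, Matrix.one_mul, hsqrt]
  have hZZ : Z * Zᵀ = W * diagonal ν * Wᵀ := by
    simp only [Z, transpose_mul, diagonal_transpose, Matrix.mul_assoc]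
    rw [← Matrix.mul_assoc (diagonal _), hsqrt]
  -- apply the upper bound to the nonnegative antitone weight `D - d`; the traces of `ZZᵀ` and
  -- `ZᵀZ` agree
  set D := ∑ j, |d j|
  have hdD (j) : d j ≤ D :=
    (le_abs_self _).trans (single_le_sum (fun j _ => abs_nonneg (d j)) (mem_univ j))
  have key := sum_mul_diag_mul_transpose_le le_rfl hZ hν (a := fun j => D - d j)
    (fun i j h => sub_le_sub_left (hd h) D) fun j => sub_nonneg.2 (hdD j)
  have htr : ∑ j, (Z * Zᵀ) j j = ∑ l, ν l := by
    simpa [trace, hZ] using trace_mul_comm Z Zᵀ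
  simp only [Fin.castLE_rfl, id, sub_mul, sum_sub_distrib, ← mul_sum, htr] at key
  rw [← hZZ]
  linarith

theorem exists_orthogonal_antitone_diagonalization {r : ℕ} {N : Matrix (Fin r) (Fin r) ℝ}
    (hN : N.IsSymm) : ∃ (W : Matrix (Fin r) (Fin r) ℝ) (ν : Fin r → ℝ),
      Antitone ν ∧ W * Wᵀ = 1 ∧ N = W * diagonal ν * Wᵀ := by
  have hN' : N.IsHermitian := isHermitian_iff_isSymm.2 hN
  set U : Matrix (Fin r) (Fin r) ℝ := (hN'.eigenvectorUnitary : Matrix (Fin r) (Fin r) ℝ)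
  have hU : U * Uᵀ = 1 := by
    simpa [star_eq_conjTranspose] using mem_unitaryGroup_iff.1 hN'.eigenvectorUnitary.2
  have hNU : N = U * diagonal hN'.eigenvalues * Uᵀ := by
    conv_lhs => rw [hN'.spectral_theorem]
    simp [U, Unitary.conjStarAlgAut_apply, RCLike.ofReal_real_eq_id, star_eq_conjTranspose]
  set σ := Tuple.sort (OrderDual.toDual ∘ hN'.eigenvalues)
  refine ⟨U.submatrix id σ, hN'.eigenvalues ∘ σ,
    monotone_toDual_comp_iff.1 (Tuple.monotone_sort (OrderDual.toDual ∘ hN'.eigenvalues)),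
    ?_, ?_⟩
  · rw [transpose_submatrix, submatrix_mul_equiv, hU, submatrix_id_id]
  · rw [← submatrix_diagonal_equiv, submatrix_mul_equiv, transpose_submatrix,
      submatrix_mul_equiv, submatrix_id_id]
    exact hNU

theorem fip_eq_trace {m k : ℕ} (A B : Matrix (Fin m) (Fin k) ℝ) : fip A B = trace (Aᵀ * B) := by
  rw [fip, sum_comm]
  simp [trace, mul_apply]

theorem frob2_eq_fip {m k : ℕ} (M : Matrix (Fin m) (Fin k) ℝ) : frob2 M = fip M M := by
  simp [frob2, fip, sq]

theorem fip_conj {m : ℕ} {P : Matrix (Fin m) (Fin m) ℝ} (hP : P * Pᵀ = 1)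
    (C E : Matrix (Fin m) (Fin m) ℝ) : fip (Pᵀ * C * P) (Pᵀ * E * P) = fip C E := by
  simp only [fip_eq_trace, transpose_mul, transpose_transpose, Matrix.mul_assoc]
  rw [← Matrix.mul_assoc P, hP, Matrix.one_mul, trace_mul_comm, Matrix.mul_assoc,
    Matrix.mul_assoc E, hP, Matrix.mul_one]

theorem frob2_conj {m : ℕ} {P : Matrix (Fin m) (Fin m) ℝ} (hP : P * Pᵀ = 1)
    (C : Matrix (Fin m) (Fin m) ℝ) : frob2 (Pᵀ * C * P) = frob2 C := by
  rw [frob2_eq_fip, frob2_eq_fip, fip_conj hP]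

theorem fip_diagonal_left {m : ℕ} (d : Fin m → ℝ) (M : Matrix (Fin m) (Fin m) ℝ) :
    fip (diagonal d) M = ∑ j, d j * M j j := by
  simp [fip, diagonal_apply]

theorem frob2_diagonal {m : ℕ} (d : Fin m → ℝ) : frob2 (diagonal d) = ∑ j, d j ^ 2 := by
  simp [frob2, diagonal_apply]

theorem frob2_diagonal_sub {m : ℕ} (s : Fin m → ℝ) (M : Matrix (Fin m) (Fin m) ℝ) :
    frob2 (diagonal s - M) = ∑ i, s i ^ 2 - 2 * ∑ i, s i * M i i + frob2 M := by
  have hsq (i j : Fin m) : (diagonal s i j - M i j) ^ 2 =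
      M i j ^ 2 + if i = j then s i ^ 2 - 2 * (s i * M i i) else 0 := by
    by_cases h : i = j
    · subst h; simp only [diagonal_apply_eq, if_true]; ring
    · simp [h]
  simp only [frob2, Matrix.sub_apply, hsq, sum_add_distrib, sum_ite_eq, mem_univ, if_true,
    sum_sub_distrib, mul_sum]
  ring

theorem frob2_mul_transpose {m k : ℕ} (X : Matrix (Fin m) (Fin k) ℝ) :
    frob2 (X * Xᵀ) = frob2 (Xᵀ * X) := by
  simp only [frob2_eq_fip, fip_eq_trace, transpose_mul, transpose_transpose, Matrix.mul_assoc]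
  rw [trace_mul_comm]
  simp only [Matrix.mul_assoc]

noncomputable def regularizedLoss {n r : ℕ} (A : Matrix (Fin n) (Fin n) ℝ)
    (B : Matrix (Fin r) (Fin r) ℝ) (Y : Matrix (Fin n) (Fin r) ℝ) : ℝ :=
  frob2 (A - Y * Yᵀ) + 2 * fip B (Yᵀ * Y)

theorem regularizedLoss_conj {n r : ℕ} {U : Matrix (Fin n) (Fin n) ℝ}
    {V : Matrix (Fin r) (Fin r) ℝ} (hU : U * Uᵀ = 1) (hV : V * Vᵀ = 1)
    (D : Matrix (Fin n) (Fin n) ℝ) (E : Matrix (Fin r) (Fin r) ℝ)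
    (X : Matrix (Fin n) (Fin r) ℝ) :
    regularizedLoss (Uᵀ * D * U) (Vᵀ * E * V) (Uᵀ * X * V) = regularizedLoss D E X := by
  have hYYt : Uᵀ * X * V * (Uᵀ * X * V)ᵀ = Uᵀ * (X * Xᵀ) * U := by
    simp only [transpose_mul, transpose_transpose, Matrix.mul_assoc]
    rw [← Matrix.mul_assoc V, hV, Matrix.one_mul]
  have hYtY : (Uᵀ * X * V)ᵀ * (Uᵀ * X * V) = Vᵀ * (Xᵀ * X) * V := by
    simp only [transpose_mul, transpose_transpose, Matrix.mul_assoc]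
    rw [← Matrix.mul_assoc U, hU, Matrix.one_mul]
  rw [regularizedLoss, regularizedLoss, hYYt, hYtY, ← Matrix.sub_mul, ← Matrix.mul_sub,
    frob2_conj hU, fip_conj hV]

theorem regularizedLoss_diagonal {n r : ℕ} (s : Fin n → ℝ) (d : Fin r → ℝ)
    (X : Matrix (Fin n) (Fin r) ℝ) :
    regularizedLoss (diagonal s) (diagonal d) X = ∑ i, s i ^ 2 - 2 * ∑ i, s i * (X * Xᵀ) i i +
      frob2 (Xᵀ * X) + 2 * ∑ j, d j * (Xᵀ * X) j j := by
  rw [regularizedLoss, frob2_diagonal_sub, fip_diagonal_left, frob2_mul_transpose]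

theorem le_regularizedLoss_diagonal {n r : ℕ} (hr : r ≤ n) {s : Fin n → ℝ} {d : Fin r → ℝ}
    (hs0 : ∀ i, 0 ≤ s i) (hs : Antitone s) (hd : Monotone d) (X : Matrix (Fin n) (Fin r) ℝ) :
    ∑ i, s i ^ 2 - ∑ l, max (s (Fin.castLE hr l) - d l) 0 ^ 2 ≤
      regularizedLoss (diagonal s) (diagonal d) X := by
  obtain ⟨W, ν, hν, hW, hN⟩ :=
    exists_orthogonal_antitone_diagonalization (N := Xᵀ * X) (by simp [IsSymm, transpose_mul])
  have hWtW : Wᵀ * W = 1 := mul_eq_one_comm.mp hW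
  have hZ : (X * W)ᵀ * (X * W) = diagonal ν := by
    rw [transpose_mul, Matrix.mul_assoc, ← Matrix.mul_assoc Xᵀ, hN]
    simp only [← Matrix.mul_assoc, hWtW, Matrix.one_mul]
    rw [Matrix.mul_assoc, hWtW, Matrix.mul_one]
  have hZZ : X * W * (X * W)ᵀ = X * Xᵀ := by
    rw [transpose_mul, Matrix.mul_assoc, ← Matrix.mul_assoc W, hW, Matrix.one_mul]
  have hν0 (l : Fin r) : 0 ≤ ν l :=
    sum_sq_eq_of_transpose_mul_self_eq_diagonal hZ l ▸ sum_nonneg fun i _ => sq_nonneg _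
  have hA := sum_mul_diag_mul_transpose_le hr hZ hν hs hs0
  have hB := sum_mul_le_sum_mul_diag_conj_diagonal hW hν hν0 hd
  have hfrob : frob2 (Xᵀ * X) = ∑ l, ν l ^ 2 := by
    rw [hN, ← frob2_diagonal]
    simpa using frob2_conj (P := Wᵀ) (by rwa [transpose_transpose]) (diagonal ν)
  have hpt (l : Fin r) : -max (s (Fin.castLE hr l) - d l) 0 ^ 2 ≤
      ν l ^ 2 - 2 * (s (Fin.castLE hr l) * ν l) + 2 * (d l * ν l) := by
    rcases le_total (s (Fin.castLE hr l) - d l) 0 with h | h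
    · rw [max_eq_right h]; nlinarith [hν0 l]
    · rw [max_eq_left h]; nlinarith [sq_nonneg (ν l - (s (Fin.castLE hr l) - d l))]
  have hsum := sum_le_sum fun l (_ : l ∈ univ) => hpt l
  simp only [sum_add_distrib, sum_sub_distrib, ← mul_sum, sum_neg_distrib] at hsum
  rw [hZZ] at hA
  rw [← hN] at hB
  rw [regularizedLoss_diagonal, hfrob]
  linarith

noncomputable def rectDiagonal {n r : ℕ} (hr : r ≤ n) (c : Fin r → ℝ) :
    Matrix (Fin n) (Fin r) ℝ :=
  of fun i l => if i = Fin.castLE hr l then c l else 0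

theorem rectDiagonal_transpose_mul_self {n r : ℕ} (hr : r ≤ n) (c : Fin r → ℝ) :
    (rectDiagonal hr c)ᵀ * rectDiagonal hr c = diagonal fun l => c l ^ 2 := by
  ext l m
  rcases eq_or_ne l m with rfl | h
  · simp [rectDiagonal, mul_apply, sq]
  · simp [rectDiagonal, mul_apply, diagonal_apply_ne _ h, Ne.symm h]

theorem sum_mul_rectDiagonal_mul_transpose_diag {n r : ℕ} (hr : r ≤ n) (s : Fin n → ℝ)
    (c : Fin r → ℝ) :
    ∑ i, s i * (rectDiagonal hr c * (rectDiagonal hr c)ᵀ) i i =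
      ∑ l, s (Fin.castLE hr l) * c l ^ 2 := by
  simp only [rectDiagonal, mul_apply, transpose_apply, of_apply, mul_sum]
  rw [sum_comm]
  simp [sq]

theorem regularizedLoss_rectDiagonal {n r : ℕ} (hr : r ≤ n) (s : Fin n → ℝ) (d : Fin r → ℝ) :
    regularizedLoss (diagonal s) (diagonal d)
        (rectDiagonal hr fun l => √(max (s (Fin.castLE hr l) - d l) 0)) =
      ∑ i, s i ^ 2 - ∑ l, max (s (Fin.castLE hr l) - d l) 0 ^ 2 := by
  have hc (l : Fin r) : √(max (s (Fin.castLE hr l) - d l) 0) ^ 2 =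
      max (s (Fin.castLE hr l) - d l) 0 := Real.sq_sqrt (le_max_right _ _)
  have hpt (l : Fin r) : max (s (Fin.castLE hr l) - d l) 0 ^ 2 -
      2 * (s (Fin.castLE hr l) * max (s (Fin.castLE hr l) - d l) 0) +
      2 * (d l * max (s (Fin.castLE hr l) - d l) 0) = -max (s (Fin.castLE hr l) - d l) 0 ^ 2 := by
    rcases le_total (s (Fin.castLE hr l) - d l) 0 with h | h
    · rw [max_eq_right h]; ring
    · rw [max_eq_left h]; ring
  rw [regularizedLoss_diagonal, rectDiagonal_transpose_mul_self,
    sum_mul_rectDiagonal_mul_transpose_diag, frob2_diagonal]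
  simp only [hc, diagonal_apply_eq]
  have hsum := sum_congr rfl fun l (_ : l ∈ univ) => hpt l
  simp only [sum_add_distrib, sum_sub_distrib, ← mul_sum, sum_neg_distrib] at hsum
  linarith

theorem of_mul_transpose_eq_one_of_orthonormal {m : ℕ} {u : Fin m → Fin m → ℝ}
    (hu : ∀ i j, u i ⬝ᵥ u j = if i = j then (1 : ℝ) else 0) : of u * (of u)ᵀ = 1 := by
  ext i j
  simpa [mul_apply, one_apply, dotProduct] using hu i j

theorem sum_smul_vecMulVec_eq_mul_diagonal_mul {ι m k R : Type*} [Fintype ι] [DecidableEq ι]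
    [CommSemiring R] (c : ι → R) (x : ι → m → R) (y : ι → k → R) :
    ∑ i, c i • vecMulVec (x i) (y i) = (of x)ᵀ * diagonal c * of y := by
  ext a b
  simp [mul_apply, vecMulVec_apply, Matrix.sum_apply, diagonal_apply]
  exact sum_congr rfl fun i _ => by ring

theorem regularized_eckart_young_general (n r : ℕ) (hr : r ≤ n)
    (s : Fin n → ℝ) (u : Fin n → (Fin n → ℝ))
    (d : Fin r → ℝ) (v : Fin r → (Fin r → ℝ))
    (hs0 : ∀ i, 0 ≤ s i) (hsA : Antitone s)
    (hdM : Monotone d)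
    (hu : ∀ i j, u i ⬝ᵥ u j = if i = j then (1 : ℝ) else 0)
    (hv : ∀ i j, v i ⬝ᵥ v j = if i = j then (1 : ℝ) else 0)
    (A : Matrix (Fin n) (Fin n) ℝ)
    (hA : A = ∑ i, s i • Matrix.vecMulVec (u i) (u i))
    (B : Matrix (Fin r) (Fin r) ℝ)
    (hB : B = ∑ i, d i • Matrix.vecMulVec (v i) (v i))
    (Ystar : Matrix (Fin n) (Fin r) ℝ)
    (hYstar : Ystar = ∑ i : Fin r,
      Real.sqrt (max (s (Fin.castLE hr i) - d i) 0) •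
        Matrix.vecMulVec (u (Fin.castLE hr i)) (v i)) :
    IsLeast {y : ℝ | ∃ Y : Matrix (Fin n) (Fin r) ℝ,
        y = frob2 (A - Y * Yᵀ) + 2 * fip B (Yᵀ * Y)}
      (∑ i, (s i) ^ 2 - ∑ i : Fin r, (max (s (Fin.castLE hr i) - d i) 0) ^ 2) ∧
    frob2 (A - Ystar * Ystarᵀ) + 2 * fip B (Ystarᵀ * Ystar) =
      ∑ i, (s i) ^ 2 - ∑ i : Fin r, (max (s (Fin.castLE hr i) - d i) 0) ^ 2 := by
  have hU := of_mul_transpose_eq_one_of_orthonormal hu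
  have hV := of_mul_transpose_eq_one_of_orthonormal hv
  rw [sum_smul_vecMulVec_eq_mul_diagonal_mul] at hA hB
  have hYstar' : Ystar = (of u)ᵀ *
      rectDiagonal hr (fun l => √(max (s (Fin.castLE hr l) - d l) 0)) * of v := by
    ext a b
    simp [hYstar, rectDiagonal, mul_apply, vecMulVec_apply, Matrix.sum_apply]
    exact sum_congr rfl fun l _ => by ring
  have hval : regularizedLoss A B Ystar =
      ∑ i, s i ^ 2 - ∑ l, max (s (Fin.castLE hr l) - d l) 0 ^ 2 := by
    rw [hA, hB, hYstar', regularizedLoss_conj hU hV, regularizedLoss_rectDiagonal]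
  refine ⟨⟨⟨Ystar, hval.symm⟩, ?_⟩, hval⟩
  rintro _ ⟨Y, rfl⟩
  have hY : Y = (of u)ᵀ * (of u * Y * (of v)ᵀ) * of v := by
    simp only [← Matrix.mul_assoc, mul_eq_one_comm.mp hU, Matrix.one_mul]
    rw [Matrix.mul_assoc, mul_eq_one_comm.mp hV, Matrix.mul_one]
  change _ ≤ regularizedLoss A B Y
  rw [hA, hB, hY, regularizedLoss_conj hU hV]
  exact le_regularizedLoss_diagonal hr hs0 hsA hdM _

/-- Regularized Eckart–Young: for PSD `A = Σ sᵢ uᵢuᵢᵀ` (eigenvalues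
descending, `uᵢ` orthonormal) and PSD `B = Σ dᵢ vᵢvᵢᵀ` (eigenvalues ascending,
`vᵢ` orthonormal), `r ≤ n`, the minimum over `Y ∈ ℝ^{n×r}` of
`‖A − YYᵀ‖_F² + 2⟨B, YᵀY⟩` equals `Σ sᵢ² − Σᵢ≤r (max(sᵢ − dᵢ,0))²`, attained at
`Y* = Σᵢ uᵢvᵢᵀ √(max(sᵢ − dᵢ,0))`. -/
theorem regularized_eckart_young (n r : ℕ) (hr : r ≤ n)
    (s : Fin n → ℝ) (u : Fin n → (Fin n → ℝ))
    (d : Fin r → ℝ) (v : Fin r → (Fin r → ℝ))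
    (hs0 : ∀ i, 0 ≤ s i) (hsA : Antitone s)
    (hd0 : ∀ i, 0 ≤ d i) (hdM : Monotone d)
    (hu : ∀ i j, u i ⬝ᵥ u j = if i = j then (1 : ℝ) else 0)
    (hv : ∀ i j, v i ⬝ᵥ v j = if i = j then (1 : ℝ) else 0)
    (A : Matrix (Fin n) (Fin n) ℝ)
    (hA : A = ∑ i, s i • Matrix.vecMulVec (u i) (u i))
    (B : Matrix (Fin r) (Fin r) ℝ)
    (hB : B = ∑ i, d i • Matrix.vecMulVec (v i) (v i))
    (Ystar : Matrix (Fin n) (Fin r) ℝ)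
    (hYstar : Ystar = ∑ i : Fin r,
      Real.sqrt (max (s (Fin.castLE hr i) - d i) 0) •
        Matrix.vecMulVec (u (Fin.castLE hr i)) (v i)) :
    IsLeast {y : ℝ | ∃ Y : Matrix (Fin n) (Fin r) ℝ,
        y = frob2 (A - Y * Yᵀ) + 2 * fip B (Yᵀ * Y)}
      (∑ i, (s i) ^ 2 - ∑ i : Fin r, (max (s (Fin.castLE hr i) - d i) 0) ^ 2) ∧
    frob2 (A - Ystar * Ystarᵀ) + 2 * fip B (Ystarᵀ * Ystar) =
      ∑ i, (s i) ^ 2 - ∑ i : Fin r, (max (s (Fin.castLE hr i) - d i) 0) ^ 2 :=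
  regularized_eckart_young_general n r hr s u d v hs0 hsA hdM hu hv A hA B hB Ystar hYstar
end

section
/- Let X ∈ ℝ^{n×r} satisfy (S − XXᵀ)X = XD where S is real symmetric n×n and D is real diagonal r×r. Then there exists Y ∈ ℝ^{n×r} with YᵀY diagonal such that (S − YYᵀ)Y = YD, YYᵀ = XXᵀ, and ⟨D, YᵀY⟩ = ⟨D, XᵀX⟩. -/
/-!
With `A = XᵀX`, the hypothesis gives `A D = Xᵀ (S - XXᵀ) X`, a symmetric matrix, so `A` commutes
with `D`. Since `D = diagonal d`, this means `A i j = 0` whenever `d i ≠ d j`: `A` is block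
diagonal along the level sets of `d`. Diagonalizing each block by an orthogonal matrix gives an
orthogonal `V` with the same block pattern, hence commuting with `D`, such that `VᵀAV` is
diagonal. Then `Y = XV` works: `YYᵀ = XXᵀ`, `(S - XXᵀ)XV = XDV = XVD`, and
`tr(D VᵀAV) = tr(V D Vᵀ A) = tr(D A)`.
-/

open Matrix

namespace Matrix

variable {ι κ 𝕜 : Type*} [Fintype ι] [DecidableEq ι] [RCLike 𝕜]

theorem IsHermitian.exists_mem_unitaryGroup_isDiag {A : Matrix ι ι 𝕜} (hA : A.IsHermitian) :
    ∃ U ∈ unitaryGroup ι 𝕜, (star U * A * U).IsDiag := by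
  refine ⟨hA.eigenvectorUnitary, hA.eigenvectorUnitary.2, ?_⟩
  have hdiag := hA.conjStarAlgAut_star_eigenvectorUnitary
  rw [Unitary.conjStarAlgAut_star_apply] at hdiag
  rw [hdiag]
  exact isDiag_diagonal _

section BlockDiagonal

variable {o α : Type*} {m' : o → Type*} [DecidableEq o]

theorem blockDiagonal'_mem_unitaryGroup [Fintype o] [∀ k, Fintype (m' k)]
    [∀ k, DecidableEq (m' k)] [CommRing α] [StarRing α]
    {U : ∀ k, Matrix (m' k) (m' k) α} (hU : ∀ k, U k ∈ unitaryGroup (m' k) α) :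
    blockDiagonal' U ∈ unitaryGroup (Σ k, m' k) α := by
  rw [mem_unitaryGroup_iff', star_eq_conjTranspose, blockDiagonal'_conjTranspose,
    ← blockDiagonal'_mul]
  simp_rw [← star_eq_conjTranspose, mem_unitaryGroup_iff'.mp (hU _)]
  exact blockDiagonal'_one

theorem isDiag_blockDiagonal' [Zero α] {M : ∀ k, Matrix (m' k) (m' k) α}
    (hM : ∀ k, (M k).IsDiag) : (blockDiagonal' M).IsDiag := by
  rintro ⟨k, i⟩ ⟨k', j⟩ hne
  obtain rfl | hk := eq_or_ne k k'
  · exact (blockDiagonal'_apply_eq M k i j).trans (hM k fun hij => hne (hij ▸ rfl))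
  · exact blockDiagonal'_apply_ne M i j hk

end BlockDiagonal

theorem submatrix_mem_unitaryGroup {α ι' : Type*} [Fintype ι'] [DecidableEq ι'] [CommRing α]
    [StarRing α] {U : Matrix ι ι α} (hU : U ∈ unitaryGroup ι α) (e : ι' ≃ ι) :
    U.submatrix e e ∈ unitaryGroup ι' α := by
  rw [mem_unitaryGroup_iff', star_eq_conjTranspose, conjTranspose_submatrix, submatrix_mul_equiv,
    ← star_eq_conjTranspose, mem_unitaryGroup_iff'.mp hU, submatrix_one_equiv]

theorem IsHermitian.exists_mem_unitaryGroup_isDiag_of_apply_eq_zero {A : Matrix ι ι 𝕜}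
    (hA : A.IsHermitian) (f : ι → κ) (hAf : ∀ i j, f i ≠ f j → A i j = 0) :
    ∃ U ∈ unitaryGroup ι 𝕜, (∀ i j, f i ≠ f j → U i j = 0) ∧ (star U * A * U).IsDiag := by
  classical
  -- `blockDiagonal'` needs a finite type of blocks, so index them by `Set.range f`
  let g : ι → Set.range f := Set.rangeFactorization f
  have hg : ∀ i j, g i ≠ g j ↔ f i ≠ f j := fun i j => Subtype.ext_iff.not
  let e := Equiv.sigmaFiberEquiv g
  let B c : Matrix {i // g i = c} {i // g i = c} 𝕜 := A.submatrix (↑) (↑)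
  choose U hU hUB using fun c =>
    (hA.submatrix ((↑) : {i // g i = c} → ι)).exists_mem_unitaryGroup_isDiag
  have hAB : A.submatrix e e = blockDiagonal' B := by
    ext ⟨c, i⟩ ⟨c', j⟩
    obtain rfl | hc := eq_or_ne c c'
    · exact (blockDiagonal'_apply_eq B c i j).symm
    · rw [blockDiagonal'_apply_ne B i j hc]
      exact hAf i j ((hg i j).mp (by rwa [i.2, j.2]))
  refine ⟨(blockDiagonal' U).submatrix e.symm e.symm,
    submatrix_mem_unitaryGroup (blockDiagonal'_mem_unitaryGroup hU) e.symm, ?_, ?_⟩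
  · intro i j hij
    exact blockDiagonal'_apply_ne U _ _ ((hg i j).mpr hij)
  · rw [← submatrix_id_id A, ← e.self_comp_symm, ← submatrix_submatrix, hAB,
      star_eq_conjTranspose, conjTranspose_submatrix, submatrix_mul_equiv, submatrix_mul_equiv,
      blockDiagonal'_conjTranspose, ← blockDiagonal'_mul, ← blockDiagonal'_mul]
    exact (isDiag_blockDiagonal' hUB).submatrix e.symm.injective

theorem commute_diagonal_iff {R : Type*} [CommRing R] [NoZeroDivisors R] {M : Matrix ι ι R}
    {d : ι → R} : Commute M (diagonal d) ↔ ∀ i j, d i ≠ d j → M i j = 0 := by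
  simp only [commute_iff_eq, ← ext_iff, mul_diagonal, diagonal_mul]
  refine forall₂_congr fun i j => ?_
  rw [mul_comm (d i), ← sub_eq_zero, ← mul_sub, mul_eq_zero, sub_eq_zero, ne_comm]
  tauto

theorem IsHermitian.exists_mem_unitaryGroup_commute_isDiag {A : Matrix ι ι 𝕜}
    (hA : A.IsHermitian) {d : ι → 𝕜} (hAd : Commute A (diagonal d)) :
    ∃ U ∈ unitaryGroup ι 𝕜, Commute U (diagonal d) ∧ (star U * A * U).IsDiag := by
  obtain ⟨U, hU, hUd, hUA⟩ :=
    hA.exists_mem_unitaryGroup_isDiag_of_apply_eq_zero d (commute_diagonal_iff.mp hAd)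
  exact ⟨U, hU, commute_diagonal_iff.mpr hUd, hUA⟩

theorem trace_mul_transpose_mul_mul_of_commute {R : Type*} [CommRing R]
    {A D V : Matrix ι ι R} (hV : V * Vᵀ = 1) (hVD : Commute V D) :
    (D * (Vᵀ * A * V)).trace = (D * A).trace :=
  calc (D * (Vᵀ * A * V)).trace = (V * D * Vᵀ * A).trace := by
        rw [← Matrix.mul_assoc, ← Matrix.mul_assoc, trace_mul_comm, ← Matrix.mul_assoc,
          ← Matrix.mul_assoc]
    _ = (D * A).trace := by rw [hVD.eq, Matrix.mul_assoc D, hV, Matrix.mul_one]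

theorem commute_transpose_mul_self_of_mul_eq {R m n : Type*} [CommRing R] [Fintype m]
    [Fintype n] {S : Matrix m m R} {D : Matrix n n R} {X : Matrix m n R} (hS : S.IsSymm)
    (hD : D.IsSymm) (h : (S - X * Xᵀ) * X = X * D) : Commute (Xᵀ * X) D := by
  have hXD : Xᵀ * X * D = Xᵀ * (S - X * Xᵀ) * X := by
    rw [Matrix.mul_assoc, ← h, Matrix.mul_assoc]
  have hsymm : (Xᵀ * (S - X * Xᵀ) * X)ᵀ = Xᵀ * (S - X * Xᵀ) * X := by
    simp only [transpose_mul, transpose_sub, transpose_transpose, hS.eq, Matrix.mul_assoc]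
  calc Xᵀ * X * D = (Xᵀ * X * D)ᵀ := by rw [hXD, hsymm]
    _ = D * (Xᵀ * X) := by rw [transpose_mul, transpose_mul, transpose_transpose, hD.eq]

end Matrix

/-- if `(S − XXᵀ)X = XD` with `S` symmetric and `D` diagonal, then
there is `Y` with `YᵀY` diagonal, `(S − YYᵀ)Y = YD`, `YYᵀ = XXᵀ`, and
`⟨D, YᵀY⟩ = ⟨D, XᵀX⟩`. -/
theorem exists_diag_gram (n r : ℕ) (X : Matrix (Fin n) (Fin r) ℝ)
    (S : Matrix (Fin n) (Fin n) ℝ) (D : Matrix (Fin r) (Fin r) ℝ)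
    (hS : S.IsSymm) (hD : D.IsDiag)
    (h : (S - X * Xᵀ) * X = X * D) :
    ∃ Y : Matrix (Fin n) (Fin r) ℝ, (Yᵀ * Y).IsDiag ∧
      (S - Y * Yᵀ) * Y = Y * D ∧ Y * Yᵀ = X * Xᵀ ∧
      (Dᵀ * (Yᵀ * Y)).trace = (Dᵀ * (Xᵀ * X)).trace := by
  have hXD := commute_transpose_mul_self_of_mul_eq hS hD.isSymm h
  rw [← hD.diagonal_diag] at h hXD ⊢
  have hA : (Xᵀ * X).IsHermitian := by
    simpa only [conjTranspose_eq_transpose_of_trivial] using isHermitian_conjTranspose_mul_self X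
  obtain ⟨V, hV, hVD, hVA⟩ := hA.exists_mem_unitaryGroup_commute_isDiag hXD
  rw [star_eq_conjTranspose, conjTranspose_eq_transpose_of_trivial] at hVA
  rw [mem_unitaryGroup_iff, star_eq_conjTranspose, conjTranspose_eq_transpose_of_trivial] at hV
  have hYY : X * V * (X * V)ᵀ = X * Xᵀ := by
    rw [transpose_mul, Matrix.mul_assoc, ← Matrix.mul_assoc V, hV, Matrix.one_mul]
  have hYtY : (X * V)ᵀ * (X * V) = Vᵀ * (Xᵀ * X) * V := by
    simp only [transpose_mul, Matrix.mul_assoc]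
  refine ⟨X * V, hYtY ▸ hVA, ?_, hYY, ?_⟩
  · rw [hYY, ← Matrix.mul_assoc, h, Matrix.mul_assoc, ← hVD.eq, Matrix.mul_assoc]
  · rw [hYtY, diagonal_transpose, trace_mul_transpose_mul_mul_of_commute hV hVD]
end

section
/- Let X ∈ ℝ^{n×r} satisfy SX = X(D + XᵀX) where S is an n×n real diagonal matrix and both D and XᵀX are r×r real diagonal matrices. Then there exists a generalized permutation matrix Y ∈ ℝ^{n×r} satisfying SY = Y(D + YᵀY), with YᵀY = XᵀX and ⟨S, YYᵀ⟩ = ⟨S, XXᵀ⟩. -/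
open Matrix

/-- A generalized permutation matrix: at most one nonzero entry per row and
at most one nonzero entry per column. -/
def IsGenPerm {n r : ℕ} (Y : Matrix (Fin n) (Fin r) ℝ) : Prop :=
  (∀ i j j', Y i j ≠ 0 → Y i j' ≠ 0 → j = j') ∧
  (∀ i i' j, Y i j ≠ 0 → Y i' j ≠ 0 → i = i')

/-!
Write `S = diag s`, `D = diag d`, `XᵀX = diag c` and `λ = d + c`. Entrywise, `SX = X(D + XᵀX)`
says that `X i j ≠ 0` forces `s i = λ j`. For each value `v`, the columns `j` with `c j ≠ 0` and
`λ j = v` are pairwise orthogonal nonzero vectors supported on the rows `i` with `s i = v`, so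
there are at most as many of them as such rows. Hence some injection `f` from the nonzero columns
into the rows satisfies `s ∘ f = λ`, and `Y` is the matrix with entry `√(c j)` at `(f j, j)`.
Finally `⟨S, MMᵀ⟩ = tr(MᵀSM) = tr(MᵀM (D + MᵀM))` for both `M = X` and `M = Y`.
-/

open Function

theorem Function.exists_injective_comp_eq_of_card_fiber_le {α β γ : Type*} [Fintype α]
    [Fintype β] [DecidableEq γ] (p : α → γ) (q : β → γ)
    (h : ∀ v, Fintype.card {a // p a = v} ≤ Fintype.card {b // q b = v}) :
    ∃ f : α → β, Injective f ∧ q ∘ f = p := by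
  have e := fun v ↦ (Embedding.nonempty_of_card_le (h v)).some
  let F : α ↪ β := ((Equiv.sigmaFiberEquiv p).symm.toEmbedding.trans
    (Embedding.sigmaMap (Embedding.refl γ) e)).trans (Equiv.sigmaFiberEquiv q).toEmbedding
  exact ⟨F, F.injective, funext fun a ↦ (e (p a) ⟨a, rfl⟩).2⟩

namespace Matrix

variable {m k : Type*} [Fintype m]

theorem card_le_card_of_transpose_mul_self_eq_diagonal {K : Type*} [Field K] [Fintype k]
    [DecidableEq k] (M : Matrix m k K) {d : k → K} (hd : ∀ j, d j ≠ 0)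
    (h : Mᵀ * M = diagonal d) : Fintype.card k ≤ Fintype.card m := by
  classical
  calc Fintype.card k = (diagonal d).rank := by
        rw [rank_diagonal, Fintype.card_congr (Equiv.subtypeUnivEquiv hd)]
    _ = (Mᵀ * M).rank := by rw [h]
    _ ≤ M.rank := rank_mul_le_right _ _
    _ ≤ Fintype.card m := rank_le_card_height M

theorem transpose_mul_self_submatrix_of_support {l R : Type*} [NonUnitalNonAssocSemiring R]
    (X : Matrix m k R) (p : m → Prop) [DecidablePred p] (e : l → k)
    (hX : ∀ i j, X i (e j) ≠ 0 → p i) :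
    (X.submatrix ((↑) : {i // p i} → m) e)ᵀ * X.submatrix ((↑) : {i // p i} → m) e =
      (Xᵀ * X).submatrix e e := by
  ext j j'
  simp only [Matrix.mul_apply, transpose_apply, submatrix_apply]
  rw [← Finset.sum_subtype (Finset.univ.filter p) (by simp) (fun i ↦ X i (e j) * X i (e j')),
    Finset.sum_filter_of_ne fun i _ hi ↦ hX i j (left_ne_zero_of_mul hi)]

theorem diagonal_mul_eq_mul_diagonal_iff {R : Type*} [CommRing R] [IsDomain R] [Fintype k]
    [DecidableEq m] [DecidableEq k] {s : m → R} {l : k → R} {M : Matrix m k R} :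
    diagonal s * M = M * diagonal l ↔ ∀ i j, M i j ≠ 0 → s i = l j := by
  rw [← Matrix.ext_iff]
  simp only [diagonal_mul, mul_diagonal, mul_comm (s _), mul_eq_mul_left_iff, or_iff_not_imp_right]

theorem trace_transpose_mul_mul_transpose_of_mul_eq {R : Type*} [CommSemiring R] [Fintype k]
    {S : Matrix m m R} (hS : S.IsSymm) {M : Matrix m k R} {B : Matrix k k R} (h : S * M = M * B) :
    (Sᵀ * (M * Mᵀ)).trace = (Mᵀ * M * B).trace := by
  rw [trace_mul_cycle', hS.eq, h, Matrix.mul_assoc]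

theorem exists_injective_of_transpose_mul_self_eq_diagonal {K γ : Type*} [Field K] [Fintype k]
    [DecidableEq k] (X : Matrix m k K) {c : k → K} (hX : Xᵀ * X = diagonal c) (s : m → γ)
    (l : k → γ) (hsupp : ∀ i j, X i j ≠ 0 → s i = l j) :
    ∃ f : {j // c j ≠ 0} → m, Injective f ∧ ∀ j, s (f j) = l j := by
  classical
  have hcard (v : γ) :
      Fintype.card {j : {j // c j ≠ 0} // l j = v} ≤ Fintype.card {i // s i = v} := by
    let e : {j : {j // c j ≠ 0} // l j = v} → k := fun j ↦ j.1.1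
    have he : Injective e := fun j j' h ↦ Subtype.ext (Subtype.ext h)
    refine card_le_card_of_transpose_mul_self_eq_diagonal (X.submatrix (↑) e) (fun j ↦ j.1.2) ?_
    rw [transpose_mul_self_submatrix_of_support X _ e fun i j hij ↦ (hsupp i _ hij).trans j.2, hX,
      submatrix_diagonal _ _ he]
    rfl
  obtain ⟨f, hf, hfs⟩ := exists_injective_comp_eq_of_card_fiber_le _ _ hcard
  exact ⟨f, hf, congrFun hfs⟩

end Matrix

theorem exists_isGenPerm_transpose_mul_self_eq_diagonal {n r : ℕ} {c : Fin r → ℝ}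
    (hc : ∀ j, 0 ≤ c j) {f : {j // c j ≠ 0} → Fin n} (hf : Injective f) :
    ∃ Y : Matrix (Fin n) (Fin r) ℝ, IsGenPerm Y ∧ Yᵀ * Y = diagonal c ∧
      ∀ i j, Y i j ≠ 0 → ∃ h : c j ≠ 0, f ⟨j, h⟩ = i := by
  let Y : Matrix (Fin n) (Fin r) ℝ :=
    of fun i j ↦ if h : c j ≠ 0 then if f ⟨j, h⟩ = i then √(c j) else 0 else 0
  have hsupp : ∀ i j, Y i j ≠ 0 → ∃ h : c j ≠ 0, f ⟨j, h⟩ = i := by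
    intro i j hY
    simp only [Y, of_apply] at hY
    split_ifs at hY with hcj hfj
    exacts [⟨hcj, hfj⟩, absurd rfl hY, absurd rfl hY]
  have hrow : ∀ i j j', Y i j ≠ 0 → Y i j' ≠ 0 → j = j' := by
    intro i j j' hj hj'
    obtain ⟨_, rfl⟩ := hsupp i j hj
    obtain ⟨_, hff⟩ := hsupp _ j' hj'
    exact congrArg Subtype.val (hf hff).symm
  have hcol : ∀ i i' j, Y i j ≠ 0 → Y i' j ≠ 0 → i = i' := by
    intro i i' j hi hi'
    obtain ⟨_, rfl⟩ := hsupp i j hi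
    obtain ⟨_, rfl⟩ := hsupp i' j hi'
    rfl
  refine ⟨Y, ⟨hrow, hcol⟩, ?_, hsupp⟩
  ext j j'
  rw [Matrix.mul_apply]
  by_cases hjj : j = j'
  · subst hjj
    by_cases hcj : c j = 0
    · simp [Y, hcj]
    · simp [Y, hcj, Real.mul_self_sqrt (hc j)]
  · rw [diagonal_apply_ne _ hjj]
    refine Finset.sum_eq_zero fun i _ ↦ ?_
    by_contra hne
    exact hjj (hrow i j j' (left_ne_zero_of_mul hne) (right_ne_zero_of_mul hne))

/-- if `SX = X(D + XᵀX)` with `S` diagonal and `D`, `XᵀX` diagonal,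
then there is a generalized permutation `Y` with `SY = Y(D + YᵀY)`,
`YᵀY = XᵀX`, and `⟨S, YYᵀ⟩ = ⟨S, XXᵀ⟩`. -/
theorem exists_gen_perm_solution (n r : ℕ) (X : Matrix (Fin n) (Fin r) ℝ)
    (S : Matrix (Fin n) (Fin n) ℝ) (D : Matrix (Fin r) (Fin r) ℝ)
    (hS : S.IsDiag) (hD : D.IsDiag) (hXX : (Xᵀ * X).IsDiag)
    (h : S * X = X * (D + Xᵀ * X)) :
    ∃ Y : Matrix (Fin n) (Fin r) ℝ, IsGenPerm Y ∧
      S * Y = Y * (D + Yᵀ * Y) ∧ Yᵀ * Y = Xᵀ * X ∧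
      (Sᵀ * (Y * Yᵀ)).trace = (Sᵀ * (X * Xᵀ)).trace := by
  set c := (Xᵀ * X).diag
  have hXc : Xᵀ * X = diagonal c := hXX.diagonal_diag.symm
  have hDX : D + Xᵀ * X = diagonal (D.diag + c) := by
    conv_lhs => rw [← hD.diagonal_diag, hXc, diagonal_add]
    rfl
  have hXsupp : ∀ i j, X i j ≠ 0 → S.diag i = (D.diag + c) j := by
    rwa [← diagonal_mul_eq_mul_diagonal_iff, hS.diagonal_diag, ← hDX]
  obtain ⟨f, hf, hfS⟩ := exists_injective_of_transpose_mul_self_eq_diagonal X hXc _ _ hXsupp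
  obtain ⟨Y, hY, hYc, hYsupp⟩ := exists_isGenPerm_transpose_mul_self_eq_diagonal
    (fun _ ↦ (posSemidef_conjTranspose_mul_self X).diag_nonneg) hf
  have hYX : Yᵀ * Y = Xᵀ * X := hYc.trans hXc.symm
  have hSY : S * Y = Y * (D + Yᵀ * Y) := by
    rw [hYX, hDX, ← hS.diagonal_diag, diagonal_mul_eq_mul_diagonal_iff]
    intro i j hij
    obtain ⟨_, rfl⟩ := hYsupp i j hij
    exact hfS _
  refine ⟨Y, hY, hSY, hYX, ?_⟩
  rw [trace_transpose_mul_mul_transpose_of_mul_eq hS.isSymm hSY,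
    trace_transpose_mul_mul_transpose_of_mul_eq hS.isSymm h, hYX]
end

section
/- Given s₁ ≥ s₂ ≥ ⋯ ≥ s_r ≥ 0 and 0 ≤ d₁ ≤ d₂ ≤ ⋯ ≤ d_r, for every permutation π of {1,…,r} one has Σᵢ (max(s_{π(i)} − dᵢ, 0))² ≤ Σᵢ (max(sᵢ − dᵢ, 0))²; i.e., the sum Σᵢ (s_{π(i)} − dᵢ)₊² is maximized by pairing the largest s with the smallest d (natural ordering). -/
/-!
The cost `F i j = (s j - d i)₊²` is supermodular in `(i, j)` because `x ↦ x₊²` is convex, and for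
supermodular costs the identity pairing beats every permutation: moving the largest displaced
index `a` back to its place (composing with the transposition of `a` and `σ a`) is an exchange
that does not decrease the sum and strictly shrinks the set of displaced indices.
-/

open Equiv Finset

theorem Equiv.Perm.support_swap_mul_subset_erase {α : Type*} [DecidableEq α] [Fintype α]
    (σ : Perm α) (a : α) : (swap a (σ a) * σ).support ⊆ σ.support.erase a := by
  intro x hx
  rw [Perm.mem_support, Perm.mul_apply] at hx
  have hxa : x ≠ a := by
    rintro rfl
    simp at hx
  refine mem_erase.2 ⟨hxa, Perm.mem_support.2 fun hfix => hx ?_⟩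
  have hxσa : x ≠ σ a := fun h => hxa (σ.injective (by rw [← h, hfix]))
  rw [hfix, swap_apply_of_ne_of_ne hxa hxσa]

section Supermodular

variable {ι M : Type*} [LinearOrder ι] [Fintype ι]
  [AddCommGroup M] [PartialOrder M] [IsOrderedAddMonoid M] {F : ι → ι → M}

theorem sum_perm_le_sum_swap_mul_of_supermodular
    (hF : ∀ ⦃i i' j j'⦄, i ≤ i' → j ≤ j' → F i j' + F i' j ≤ F i j + F i' j')
    (σ : Perm ι) {a : ι} (hσa : σ a ≤ a) (hσa' : σ⁻¹ a ≤ a) :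
    ∑ i, F i (σ i) ≤ ∑ i, F i ((swap a (σ a) * σ) i) := by
  obtain hfix | hmove := eq_or_ne (σ a) a
  · simp [hfix]
  set b := σ⁻¹ a
  have hσb : σ b = a := by simp [b]
  have hba : b ≠ a := fun h => hmove (by rwa [h] at hσb)
  rw [← sub_nonneg, ← sum_sub_distrib, Fintype.sum_eq_add a b hba.symm]
  · simp only [Perm.mul_apply, swap_apply_left, hσb, swap_apply_right]
    convert sub_nonneg.2 (hF hσa' hσa) using 1
    abel
  · rintro x ⟨hxa, hxb⟩
    have hσx : σ x ≠ a := fun h => hxb (by simp [b, ← h])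
    have hσx' : σ x ≠ σ a := σ.injective.ne hxa
    rw [Perm.mul_apply, swap_apply_of_ne_of_ne hσx hσx', sub_self]

theorem sum_perm_le_sum_diag_of_supermodular
    (hF : ∀ ⦃i i' j j'⦄, i ≤ i' → j ≤ j' → F i j' + F i' j ≤ F i j + F i' j')
    (σ : Perm ι) : ∑ i, F i (σ i) ≤ ∑ i, F i i := by
  suffices ∀ t : Finset ι, ∀ σ : Perm ι, σ.support ⊆ t → ∑ i, F i (σ i) ≤ ∑ i, F i i from
    this univ σ (subset_univ _)
  intro t
  induction t using Finset.induction_on_max with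
  | empty =>
    intro σ hσ
    rw [subset_empty, Perm.support_eq_empty_iff] at hσ
    simp [hσ]
  | insert a t hlt ih =>
    intro σ hσ
    by_cases ha : a ∈ σ.support
    · have below : ∀ x ∈ σ.support, x ≤ a := fun x hx =>
        (mem_insert.1 (hσ hx)).elim le_of_eq fun hxt => (hlt x hxt).le
      have hσa' : σ⁻¹ a ≤ a := by
        rw [← Perm.support_inv] at below ha
        exact below _ (σ⁻¹.apply_mem_support.2 ha)
      refine (sum_perm_le_sum_swap_mul_of_supermodular hF σ
        (below _ (σ.apply_mem_support.2 ha)) hσa').trans (ih _ ?_)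
      exact (Perm.support_swap_mul_subset_erase σ a).trans
        ((erase_subset_erase a hσ).trans (erase_insert_subset a t))
    · exact ih σ fun x hx => mem_of_mem_insert_of_ne (hσ hx) (ne_of_mem_of_not_mem hx ha)

end Supermodular

theorem sq_max_sub_zero_add_le {A B c e : ℝ} (hBA : B ≤ A) (hce : c ≤ e) :
    max (B - c) 0 ^ 2 + max (A - e) 0 ^ 2 ≤ max (A - c) 0 ^ 2 + max (B - e) 0 ^ 2 := by
  rcases le_total (A - e) 0 with h1 | h1 <;> rcases le_total (B - e) 0 with h2 | h2 <;>
    rcases le_total (A - c) 0 with h3 | h3 <;> rcases le_total (B - c) 0 with h4 | h4 <;>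
    simp only [max_eq_left, max_eq_right, h1, h2, h3, h4] <;> nlinarith

theorem rearrangement_pos_part_general (r : ℕ) (s d : Fin r → ℝ)
    (hsA : Antitone s) (hdM : Monotone d) (π : Equiv.Perm (Fin r)) :
    ∑ i, (max (s (π i) - d i) 0) ^ 2 ≤ ∑ i, (max (s i - d i) 0) ^ 2 :=
  sum_perm_le_sum_diag_of_supermodular (F := fun i j => max (s j - d i) 0 ^ 2)
    (fun _ _ _ _ hi hj => sq_max_sub_zero_add_le (hsA hj) (hdM hi)) π

/-- rearrangement: with `s` descending and `d` ascending (both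
nonnegative), `Σᵢ (s_{π(i)} − dᵢ)₊²` is maximized by the natural pairing. -/
theorem rearrangement_pos_part (r : ℕ) (s d : Fin r → ℝ)
    (hs : ∀ i, 0 ≤ s i) (hd : ∀ i, 0 ≤ d i)
    (hsA : Antitone s) (hdM : Monotone d) (π : Equiv.Perm (Fin r)) :
    ∑ i, (max (s (π i) - d i) 0) ^ 2 ≤ ∑ i, (max (s i - d i) 0) ^ 2 :=
  rearrangement_pos_part_general r s d hsA hdM π
end

section
/- For parameters t = r*/r ∈ (0,1] define γ(α,β) = √(1−α²) if β ≥ α/(1+√(1−α²)), and γ(α,β) = (1 − 2αβ + β²)/(1 − β²) if β ≤ α/(1+√(1−α²)). Then the minimum of γ(α,β) over α, β ≥ 0 subject to α² + (1/t)·min{α², β²} ≤ 1 equals 1/(1+√t). -/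
/-! Write `t = s²`. On the second branch `β < α`, so the constraint reads `s²α² + β² ≤ s²`, and
the AM-GM inequality `2s(1+s)αβ ≤ s²α² + (1+s)²β²` combined with it gives exactly
`γ ≥ 1/(1+s)`; equality holds at `α = (1+s)/d`, `β = s/d` with `d = √((1+s)² + 1)`, which lies
on the second branch. On the first branch `β ≥ α/(1+c)` with `c = √(1-α²)`, so the constraint
forces `1 - c ≤ s²c²(1+c)`, which fails for `c < 1/(1+s)`. -/

theorem one_div_one_add_le_of_one_sub_le {s c : ℝ} (hs : 0 ≤ s) (hc : 0 ≤ c)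
    (h : 1 - c ≤ s ^ 2 * c ^ 2 * (1 + c)) : 1 / (1 + s) ≤ c := by
  rw [div_le_iff₀ (by positivity)]
  by_contra! hlt
  have hsq : (s * c) ^ 2 < (1 - c) ^ 2 :=
    pow_lt_pow_left₀ (by linarith) (by positivity) two_ne_zero
  nlinarith [mul_lt_mul_of_pos_right hsq (by positivity : (0 : ℝ) < 1 + c)]

theorem one_div_one_add_le_sqrt_one_sub_sq {s α : ℝ} (hs : 0 < s)
    (h : α ^ 2 + 1 / s ^ 2 * (α / (1 + √(1 - α ^ 2))) ^ 2 ≤ 1) :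
    1 / (1 + s) ≤ √(1 - α ^ 2) := by
  have hα1 : α ^ 2 ≤ 1 := by
    have : 0 ≤ 1 / s ^ 2 * (α / (1 + √(1 - α ^ 2))) ^ 2 := by positivity
    linarith
  set c := √(1 - α ^ 2)
  have hc0 : 0 ≤ c := Real.sqrt_nonneg _
  have hc2 : c ^ 2 = 1 - α ^ 2 := Real.sq_sqrt (by linarith)
  refine one_div_one_add_le_of_one_sub_le hs.le hc0 ?_
  have hfrac : (α / (1 + c)) ^ 2 = (1 - c) / (1 + c) := by
    field_simp
    nlinarith
  have key : 1 / s ^ 2 * ((1 - c) / (1 + c)) ≤ c ^ 2 := by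
    rw [hfrac] at h
    linarith
  rw [div_mul_div_comm, one_mul, div_le_iff₀ (by positivity)] at key
  linarith

theorem one_div_one_add_le_of_sq_add_div_le {s α β : ℝ} (hs : 0 < s) (hβ : β ^ 2 < 1)
    (h : α ^ 2 + 1 / s ^ 2 * β ^ 2 ≤ 1) :
    1 / (1 + s) ≤ (1 - 2 * α * β + β ^ 2) / (1 - β ^ 2) := by
  have h' : s ^ 2 * α ^ 2 + β ^ 2 ≤ s ^ 2 := by
    have := mul_le_mul_of_nonneg_left h (sq_nonneg s)
    field_simp at this
    linarith
  have amgm : 2 * s * (1 + s) * α * β ≤ s ^ 2 * α ^ 2 + (1 + s) ^ 2 * β ^ 2 := by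
    nlinarith [sq_nonneg (s * α - (1 + s) * β)]
  rw [div_le_div_iff₀ (by positivity) (by linarith)]
  nlinarith

theorem exists_second_branch_eq_one_div_one_add {s : ℝ} (hs : 0 < s) :
    ∃ α β : ℝ, 0 ≤ α ∧ 0 ≤ β ∧ α ^ 2 + 1 / s ^ 2 * min (α ^ 2) (β ^ 2) ≤ 1 ∧
      β < α / (1 + √(1 - α ^ 2)) ∧ (1 - 2 * α * β + β ^ 2) / (1 - β ^ 2) = 1 / (1 + s) := by
  set d := √((1 + s) ^ 2 + 1)
  have hd0 : 0 < d := Real.sqrt_pos.2 (by positivity)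
  have hd2 : d ^ 2 = (1 + s) ^ 2 + 1 := Real.sq_sqrt (by positivity)
  have hsd : s < d := by nlinarith
  refine ⟨(1 + s) / d, s / d, by positivity, by positivity, ?_, ?_, ?_⟩
  · rw [min_eq_right (by gcongr; linarith)]
    field_simp
    linarith
  · have hc : √(1 - ((1 + s) / d) ^ 2) = 1 / d := by
      rw [← Real.sqrt_sq (by positivity : (0 : ℝ) ≤ 1 / d)]
      congr 1
      field_simp
      linarith
    rw [hc, div_lt_div_iff₀ hd0 (by positivity)]
    field_simp
    nlinarith
  · have hβ : 1 - (s / d) ^ 2 ≠ 0 := by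
      rw [div_pow, one_sub_div (by positivity)]
      exact div_ne_zero (by nlinarith) (by positivity)
    rw [div_eq_div_iff hβ (by positivity)]
    field_simp
    nlinarith

theorem min_gamma_valid_inequality_general (t : ℝ) (ht0 : 0 < t)
    (γ : ℝ → ℝ → ℝ)
    (hγ : ∀ α β : ℝ, γ α β =
      if α / (1 + Real.sqrt (1 - α ^ 2)) ≤ β
      then Real.sqrt (1 - α ^ 2)
      else (1 - 2 * α * β + β ^ 2) / (1 - β ^ 2)) :
    IsLeast {y : ℝ | ∃ α β : ℝ, 0 ≤ α ∧ 0 ≤ β ∧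
        α ^ 2 + (1 / t) * min (α ^ 2) (β ^ 2) ≤ 1 ∧ y = γ α β}
      (1 / (1 + Real.sqrt t)) := by
  obtain ⟨s, hs, rfl⟩ : ∃ s, 0 < s ∧ t = s ^ 2 :=
    ⟨√t, Real.sqrt_pos.2 ht0, (Real.sq_sqrt ht0.le).symm⟩
  rw [Real.sqrt_sq hs.le]
  constructor
  · obtain ⟨α, β, hα, hβ, hcon, hbranch, hval⟩ := exists_second_branch_eq_one_div_one_add hs
    exact ⟨α, β, hα, hβ, hcon, by rw [hγ, if_neg hbranch.not_ge, hval]⟩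
  · rintro y ⟨α, β, hα, hβ, hcon, rfl⟩
    have hα1 : α ^ 2 ≤ 1 := by
      have : 0 ≤ 1 / s ^ 2 * min (α ^ 2) (β ^ 2) := by positivity
      linarith
    have hle : α / (1 + √(1 - α ^ 2)) ≤ α :=
      div_le_self hα (le_add_of_nonneg_right (Real.sqrt_nonneg _))
    rw [hγ]
    split_ifs with hbranch
    · refine one_div_one_add_le_sqrt_one_sub_sq hs (hcon.trans' ?_)
      gcongr
      exact le_min (by gcongr) (by gcongr)
    · have hβα : β < α := (not_le.mp hbranch).trans_le hle
      rw [min_eq_right (by gcongr)] at hcon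
      exact one_div_one_add_le_of_sq_add_div_le hs (by nlinarith) hcon

/-- for `t ∈ (0,1]`, the minimum of the two-branch function
`γ(α,β)` over `α, β ≥ 0` subject to the valid inequality
`α² + (1/t)·min{α², β²} ≤ 1` equals `1/(1 + √t)`. -/
theorem min_gamma_valid_inequality (t : ℝ) (ht0 : 0 < t) (ht1 : t ≤ 1)
    (γ : ℝ → ℝ → ℝ)
    (hγ : ∀ α β : ℝ, γ α β =
      if α / (1 + Real.sqrt (1 - α ^ 2)) ≤ β
      then Real.sqrt (1 - α ^ 2)
      else (1 - 2 * α * β + β ^ 2) / (1 - β ^ 2)) :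
    IsLeast {y : ℝ | ∃ α β : ℝ, 0 ≤ α ∧ 0 ≤ β ∧
        α ^ 2 + (1 / t) * min (α ^ 2) (β ^ 2) ≤ 1 ∧ y = γ α β}
      (1 / (1 + Real.sqrt t)) :=
  min_gamma_valid_inequality_general t ht0 γ hγ
end

section
/- For 0 < t ≤ 1, the minimum of (1 − 2αβ + β²)/(1 − β²) over α, β ≥ 0 with β < 1 subject to α² + β²/t ≤ 1 equals 1/(1 + √t). -/
/-!
Write `t = r²` with `r = √t`. Clearing denominators, the bound `1/(1+r) ≤ (1 - 2αβ + β²)/(1 - β²)`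
becomes `0 ≤ r + (2+r)β² - 2(1+r)αβ`, and the right-hand side equals
`r (1 - α² - β²/r²) + (rα - (1+r)β)²/r`, which is nonnegative under the constraint.
Equality holds when both terms vanish: `α = (1+r)/s`, `β = r/s` with `s = √((1+r)² + 1)`.
-/

open Real

namespace MinSecondBranch

variable {r : ℝ}

lemma one_div_one_add_le_ratio {α β : ℝ} (hr : 0 < r) (hβ : β ^ 2 < 1)
    (h : α ^ 2 + β ^ 2 / r ^ 2 ≤ 1) :
    1 / (1 + r) ≤ (1 - 2 * α * β + β ^ 2) / (1 - β ^ 2) := by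
  have hslack : 0 ≤ r * (1 - α ^ 2 - β ^ 2 / r ^ 2) := by nlinarith
  have hsq : 0 ≤ (r * α - (1 + r) * β) ^ 2 / r := by positivity
  have hdiff : (1 + r) * (1 - 2 * α * β + β ^ 2) - (1 - β ^ 2) =
      r * (1 - α ^ 2 - β ^ 2 / r ^ 2) + (r * α - (1 + r) * β) ^ 2 / r := by
    field_simp
    ring
  rw [div_le_div_iff₀ (by positivity) (by linarith)]
  linarith

section Optimum

variable {s : ℝ} (hr : 0 < r) (hs : 0 < s) (hs2 : s ^ 2 = (1 + r) ^ 2 + 1)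
include hr hs hs2

lemma optimum_lt_one : r / s < 1 := by
  rw [div_lt_one hs]
  nlinarith

lemma optimum_constraint : ((1 + r) / s) ^ 2 + (r / s) ^ 2 / r ^ 2 = 1 := by
  field_simp
  linarith

lemma ratio_at_optimum :
    (1 - 2 * ((1 + r) / s) * (r / s) + (r / s) ^ 2) / (1 - (r / s) ^ 2) = 1 / (1 + r) := by
  have hnum : 1 - 2 * ((1 + r) / s) * (r / s) + (r / s) ^ 2 = 2 / s ^ 2 := by
    field_simp
    linear_combination hs2
  have hden : 1 - (r / s) ^ 2 = 2 * (1 + r) / s ^ 2 := by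
    field_simp
    linear_combination hs2
  rw [hnum, hden, div_div_div_cancel_right₀ (by positivity)]
  field_simp

end Optimum

theorem isLeast_ratio (hr : 0 < r) :
    IsLeast {y : ℝ | ∃ α β : ℝ, 0 ≤ α ∧ 0 ≤ β ∧ β < 1 ∧ α ^ 2 + β ^ 2 / r ^ 2 ≤ 1 ∧
      y = (1 - 2 * α * β + β ^ 2) / (1 - β ^ 2)} (1 / (1 + r)) := by
  set s := √((1 + r) ^ 2 + 1)
  have hs : 0 < s := sqrt_pos.2 (by positivity)
  have hs2 : s ^ 2 = (1 + r) ^ 2 + 1 := sq_sqrt (by positivity)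
  refine ⟨⟨(1 + r) / s, r / s, by positivity, by positivity, optimum_lt_one hr hs hs2,
    (optimum_constraint hr hs hs2).le, (ratio_at_optimum hr hs hs2).symm⟩, ?_⟩
  rintro y ⟨α, β, -, hβ, hβ1, h, rfl⟩
  exact one_div_one_add_le_ratio hr (by nlinarith) h

end MinSecondBranch

theorem min_second_branch_general (t : ℝ) (ht0 : 0 < t) :
    IsLeast {y : ℝ | ∃ α β : ℝ, 0 ≤ α ∧ 0 ≤ β ∧ β < 1 ∧ α ^ 2 + β ^ 2 / t ≤ 1 ∧
      y = (1 - 2 * α * β + β ^ 2) / (1 - β ^ 2)} (1 / (1 + Real.sqrt t)) := by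
  simpa only [sq_sqrt ht0.le] using MinSecondBranch.isLeast_ratio (sqrt_pos.2 ht0)

/-- for `0 < t ≤ 1`, the minimum of `(1 − 2αβ + β²)/(1 − β²)` over
`α, β ≥ 0`, `β < 1`, subject to `α² + β²/t ≤ 1`, equals `1/(1 + √t)`. -/
theorem min_second_branch (t : ℝ) (ht0 : 0 < t) (ht1 : t ≤ 1) :
    IsLeast {y : ℝ | ∃ α β : ℝ, 0 ≤ α ∧ 0 ≤ β ∧ β < 1 ∧ α ^ 2 + β ^ 2 / t ≤ 1 ∧
      y = (1 - 2 * α * β + β ^ 2) / (1 - β ^ 2)} (1 / (1 + Real.sqrt t)) :=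
  min_second_branch_general t ht0
end

section
/- Given 0 ≤ α < 1 and β ≥ 0, define γ_{α,β}(t) = α·(t/β) + √(1−α²)·√(1 − t²/β²) for 0 ≤ t ≤ αβ. Then sup over t ≥ 0 of (1 + γ_{α,β}(t))/(2t + 1 − γ_{α,β}(t)) (where γ_{α,β}(t) is only required to take the given form for t ≤ αβ and the supremum is over that range appropriately) equals (1+√(1−α²))/(1−√(1−α²)) if β ≥ α/(1+√(1−α²)), and equals (1−αβ)/(β(α−β)) if β ≤ α/(1+√(1−α²)). -/
/-!
Write `t = β u`. On the arc, `γ = α u + s w` with `s = √(1 - α²)` and `w = √(1 - u²)`, so `γ` is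
the inner product of two unit vectors. Cross-multiplying, the ratio is at most `(1 + s)/(1 - s)`
iff `γ - s ≤ β (1 + s) u`, which holds once `α ≤ β (1 + s)`, and `t = 0` attains this value.
The ratio is at most `(1 - αβ)/(β(α - β))` iff `P u + Q w ≤ A`, where `P = α(1 + β²) - 2β`,
`Q = s(1 - β²)` and `A = 1 - 2αβ + β²`. Since `P² + Q² = A²`, this is Cauchy–Schwarz. Equality
holds at `(u, w) = (P, Q)/A`, which lies on the arc (`0 ≤ P/A ≤ α`) since `P ≥ 0` when
`β ≤ α/(1 + s)`.
-/

open Real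

lemma mul_add_mul_le_of_sq_add_sq_eq {P Q u w A : ℝ} (hA : 0 ≤ A)
    (hPQ : P ^ 2 + Q ^ 2 = A ^ 2) (huw : u ^ 2 + w ^ 2 = 1) : P * u + Q * w ≤ A := by
  refine le_of_sq_le_sq ?_ hA
  nlinarith [sq_nonneg (P * w - Q * u)]

section UnitCircle

variable {α β s u w : ℝ}

lemma arc_denom_pos (hβ : 0 < β) (hs : α ^ 2 + s ^ 2 = 1) (hs1 : s < 1)
    (huw : u ^ 2 + w ^ 2 = 1) (hu : 0 ≤ u) (hw : 0 ≤ w) :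
    0 < 2 * (β * u) + 1 - (α * u + s * w) := by
  have hle : α * u + s * w ≤ 1 := by
    simpa using mul_add_mul_le_of_sq_add_sq_eq zero_le_one (by simpa using hs) huw
  rcases hu.eq_or_lt with rfl | hu
  · have hw1 : w = 1 := by nlinarith
    subst hw1
    linarith
  · nlinarith

lemma arc_ratio_le_endpoint (hs0 : 0 ≤ s) (hs1 : s < 1) (hαβ : α ≤ β * (1 + s))
    (huw : u ^ 2 + w ^ 2 = 1) (hu : 0 ≤ u) (hden : 0 < 2 * (β * u) + 1 - (α * u + s * w)) :
    (1 + (α * u + s * w)) / (2 * (β * u) + 1 - (α * u + s * w)) ≤ (1 + s) / (1 - s) := by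
  have hw1 : w ≤ 1 := by nlinarith
  rw [div_le_div_iff₀ hden (by linarith)]
  linear_combination 2 * (mul_nonneg (sub_nonneg.2 hαβ) hu) + 2 * mul_nonneg hs0 (sub_nonneg.2 hw1)

lemma tangent_sq_add_sq (hs : α ^ 2 + s ^ 2 = 1) :
    (α * (1 + β ^ 2) - 2 * β) ^ 2 + (s * (1 - β ^ 2)) ^ 2 = (1 - 2 * α * β + β ^ 2) ^ 2 := by
  linear_combination (1 - β ^ 2) ^ 2 * hs

lemma arc_ratio_cross_mul_sub :
    (1 + (α * u + s * w)) * (β * (α - β)) - (1 - α * β) * (2 * (β * u) + 1 - (α * u + s * w)) =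
      (α * (1 + β ^ 2) - 2 * β) * u + s * (1 - β ^ 2) * w - (1 - 2 * α * β + β ^ 2) := by
  ring

lemma arc_ratio_le_tangent (hs : α ^ 2 + s ^ 2 = 1) (hβ : 0 < β) (hβα : β < α)
    (huw : u ^ 2 + w ^ 2 = 1) (hden : 0 < 2 * (β * u) + 1 - (α * u + s * w)) :
    (1 + (α * u + s * w)) / (2 * (β * u) + 1 - (α * u + s * w)) ≤
      (1 - α * β) / (β * (α - β)) := by
  have hA : 0 ≤ 1 - 2 * α * β + β ^ 2 := by nlinarith
  have hCS := mul_add_mul_le_of_sq_add_sq_eq hA (tangent_sq_add_sq hs) huw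
  rw [div_le_div_iff₀ hden (mul_pos hβ (sub_pos.2 hβα))]
  linarith [arc_ratio_cross_mul_sub (α := α) (β := β) (s := s) (u := u) (w := w)]

lemma arc_ratio_eq_tangent (hβ : 0 < β) (hβα : β < α)
    (hden : 2 * (β * u) + 1 - (α * u + s * w) ≠ 0)
    (htangent : (α * (1 + β ^ 2) - 2 * β) * u + s * (1 - β ^ 2) * w = 1 - 2 * α * β + β ^ 2) :
    (1 + (α * u + s * w)) / (2 * (β * u) + 1 - (α * u + s * w)) =
      (1 - α * β) / (β * (α - β)) := by
  rw [div_eq_div_iff hden (mul_pos hβ (sub_pos.2 hβα)).ne']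
  linarith [arc_ratio_cross_mul_sub (α := α) (β := β) (s := s) (u := u) (w := w)]

lemma tangent_coeff_nonneg (hα : 0 < α) (hs : α ^ 2 + s ^ 2 = 1) (hs0 : 0 ≤ s)
    (hβ : β * (1 + s) ≤ α) : 0 ≤ α * (1 + β ^ 2) - 2 * β := by
  have hαβ : α * β ≤ 1 - s := by nlinarith
  refine nonneg_of_mul_nonneg_right ?_ hα
  nlinarith [mul_nonneg (sub_nonneg.2 hαβ) (by linarith : 0 ≤ 1 + s - α * β)]

end UnitCircle

section Arc

variable {α β : ℝ} {γ : ℝ → ℝ}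

def arcRatios (α β : ℝ) (γ : ℝ → ℝ) : Set ℝ :=
  {y | ∃ t : ℝ, 0 ≤ t ∧ t ≤ α * β ∧ y = (1 + γ t) / (2 * t + 1 - γ t)}

lemma arc_apply_mul (hβ : 0 < β)
    (hγ : ∀ t, 0 ≤ t → t ≤ α * β → γ t = α * (t / β) + √(1 - α ^ 2) * √(1 - t ^ 2 / β ^ 2))
    {u : ℝ} (hu0 : 0 ≤ u) (hu : u ≤ α) : γ (β * u) = α * u + √(1 - α ^ 2) * √(1 - u ^ 2) := by
  rw [hγ _ (by positivity) (by nlinarith), mul_pow, mul_div_cancel_left₀ _ hβ.ne',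
    mul_div_cancel_left₀ _ (pow_ne_zero 2 hβ.ne')]

lemma mem_upperBounds_arcRatios (hα0 : 0 < α) (hα1 : α < 1) (hβ : 0 < β)
    (hγ : ∀ t, 0 ≤ t → t ≤ α * β → γ t = α * (t / β) + √(1 - α ^ 2) * √(1 - t ^ 2 / β ^ 2))
    {M : ℝ} (hM : ∀ u w, 0 ≤ u → u ^ 2 + w ^ 2 = 1 →
      0 < 2 * (β * u) + 1 - (α * u + √(1 - α ^ 2) * w) →
      (1 + (α * u + √(1 - α ^ 2) * w)) / (2 * (β * u) + 1 - (α * u + √(1 - α ^ 2) * w)) ≤ M) :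
    M ∈ upperBounds (arcRatios α β γ) := by
  rintro _ ⟨t, ht0, ht, rfl⟩
  obtain ⟨u, rfl⟩ : ∃ u, t = β * u := ⟨t / β, (mul_div_cancel₀ t hβ.ne').symm⟩
  have hu0 : 0 ≤ u := nonneg_of_mul_nonneg_right ht0 hβ
  have hu : u ≤ α := le_of_mul_le_mul_left (by linarith) hβ
  have hs : α ^ 2 + √(1 - α ^ 2) ^ 2 = 1 := by rw [sq_sqrt (by nlinarith)]; ring
  have huw : u ^ 2 + √(1 - u ^ 2) ^ 2 = 1 := by rw [sq_sqrt (by nlinarith)]; ring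
  rw [arc_apply_mul hβ hγ hu0 hu]
  exact hM _ _ hu0 huw <| arc_denom_pos hβ hs (by nlinarith [sqrt_nonneg (1 - α ^ 2)])
    huw hu0 (sqrt_nonneg _)

lemma tangent_mem_arcRatios (hα0 : 0 < α) (hα1 : α < 1) (hβ : 0 < β)
    (hγ : ∀ t, 0 ≤ t → t ≤ α * β → γ t = α * (t / β) + √(1 - α ^ 2) * √(1 - t ^ 2 / β ^ 2))
    (hβs : β * (1 + √(1 - α ^ 2)) ≤ α) (hβα : β < α) :
    (1 - α * β) / (β * (α - β)) ∈ arcRatios α β γ := by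
  have hs : α ^ 2 + √(1 - α ^ 2) ^ 2 = 1 := by rw [sq_sqrt (by nlinarith)]; ring
  have hs0 : 0 < √(1 - α ^ 2) := sqrt_pos.2 (by nlinarith)
  set s := √(1 - α ^ 2)
  set P := α * (1 + β ^ 2) - 2 * β
  set Q := s * (1 - β ^ 2)
  set A := 1 - 2 * α * β + β ^ 2
  have hA : 0 < A := by nlinarith
  have hP : 0 ≤ P := tangent_coeff_nonneg hα0 hs hs0.le hβs
  have hw0 : 0 ≤ Q / A := div_nonneg (mul_nonneg hs0.le (by nlinarith)) hA.le
  have hunit : (P / A) ^ 2 + (Q / A) ^ 2 = 1 := by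
    rw [div_pow, div_pow, ← add_div, tangent_sq_add_sq hs, div_self (pow_ne_zero 2 hA.ne')]
  have hu0 : 0 ≤ P / A := div_nonneg hP hA.le
  have hu : P / A ≤ α := by rw [div_le_iff₀ hA]; nlinarith
  have hw : √(1 - (P / A) ^ 2) = Q / A := by
    rw [← hunit, add_sub_cancel_left, sqrt_sq hw0]
  refine ⟨β * (P / A), by positivity, by nlinarith, ?_⟩
  rw [arc_apply_mul hβ hγ hu0 hu, hw]
  refine (arc_ratio_eq_tangent hβ hβα
    (arc_denom_pos hβ hs (by nlinarith) hunit hu0 hw0).ne' ?_).symm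
  calc P * (P / A) + Q * (Q / A) = (P ^ 2 + Q ^ 2) / A := by ring
    _ = A := by rw [tangent_sq_add_sq hs, sq, mul_div_cancel_right₀ _ hA.ne']

end Arc

/-- maximization of `(1 + γ(t))/(2t + 1 − γ(t))` over the arc
`γ(t) = α·(t/β) + √(1−α²)·√(1 − t²/β²)`, `0 ≤ t ≤ αβ`, with the two cases
depending on the position of `β` relative to `α/(1+√(1−α²))`. -/
theorem max_ratio_along_arc (α β : ℝ) (hα0 : 0 < α) (hα1 : α < 1) (hβ0 : 0 < β)
    (γ : ℝ → ℝ)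
    (hγ : ∀ t : ℝ, 0 ≤ t → t ≤ α * β →
      γ t = α * (t / β) + Real.sqrt (1 - α ^ 2) * Real.sqrt (1 - t ^ 2 / β ^ 2)) :
    (α / (1 + Real.sqrt (1 - α ^ 2)) ≤ β →
      IsGreatest {y : ℝ | ∃ t : ℝ, 0 ≤ t ∧ t ≤ α * β ∧
          y = (1 + γ t) / (2 * t + 1 - γ t)}
        ((1 + Real.sqrt (1 - α ^ 2)) / (1 - Real.sqrt (1 - α ^ 2)))) ∧
    (β ≤ α / (1 + Real.sqrt (1 - α ^ 2)) → β < α →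
      IsGreatest {y : ℝ | ∃ t : ℝ, 0 ≤ t ∧ t ≤ α * β ∧
          y = (1 + γ t) / (2 * t + 1 - γ t)}
        ((1 - α * β) / (β * (α - β)))) := by
  have hs : α ^ 2 + √(1 - α ^ 2) ^ 2 = 1 := by rw [sq_sqrt (by nlinarith)]; ring
  have hs0 : 0 < √(1 - α ^ 2) := sqrt_pos.2 (by nlinarith)
  have hs1 : √(1 - α ^ 2) < 1 := by nlinarith
  have hγ0 : γ 0 = √(1 - α ^ 2) := by simpa using hγ 0 le_rfl (by positivity)
  refine ⟨fun hβs => ⟨⟨0, le_rfl, by positivity, by simp [hγ0]⟩, ?_⟩, fun hβs hβα => ⟨?_, ?_⟩⟩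
  · rw [div_le_iff₀ (by positivity)] at hβs
    exact mem_upperBounds_arcRatios hα0 hα1 hβ0 hγ fun u w hu huw hden =>
      arc_ratio_le_endpoint hs0.le hs1 hβs huw hu hden
  · rw [le_div_iff₀ (by positivity)] at hβs
    exact tangent_mem_arcRatios hα0 hα1 hβ0 hγ hβs hβα
  · exact mem_upperBounds_arcRatios hα0 hα1 hβ0 hγ fun u w _ huw hden =>
      arc_ratio_le_tangent hs hβ0 hβα huw hden
end
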